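/- arXiv:1902.06507 — 2 statements merged into one kernel-verified Lean document; each statement's English description precedes it below -/
import Mathlib

section
/- Let K be a field, E a finite set, and W ⊆ K^E a realization of a matroid M of rank r. Let W^⊥ ⊆ K^E be the dual configuration. Then there exist bases of W and of W^⊥ such that for every subset S ⊆ E with |S| = r one has c_{W,S} = c_{W^⊥,E∖S}. Consequently, in the Laurent polynomial ring K[x_e^{±1} : e ∈ E], ψ_{W^⊥}(x) = (Π_{e∈E} x_e) · ψ_W((x_e^{−1})_{e∈E}). -/
open scoped BigOperators

namespace Config

variable {K : Type} [Field K] {E : Type} [Fintype E] [DecidableEq E]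

/-- `w` is a (linear) basis of the configuration `W ⊆ K^E`. -/
def IsBasisOf {r : ℕ} (w : Fin r → E → K) (W : Submodule K (E → K)) : Prop :=
  LinearIndependent K w ∧ Submodule.span K (Set.range w) = W

/-- The coefficient `c_{W,B} = (det (w^i_e)_{1≤i≤r, e∈B})²`, the squared determinant of
the `r × r` submatrix of the coefficient matrix of `w` with column set `B` (the square
is independent of the chosen ordering of the columns). -/
noncomputable def cSq {r : ℕ} (w : Fin r → E → K) (B : Finset E) : K :=
  if h : B.card = r then
    (Matrix.det (Matrix.of fun i j : Fin r =>
      w i ((Finset.equivFinOfCardEq h).symm j : E))) ^ 2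
  else 0

/-- The configuration polynomial `ψ_W = ∑_B c_{W,B} · x^B` computed from the basis `w`
(the coefficient `c_{W,B}` vanishes unless `B` is a basis of the matroid `M_W`). -/
noncomputable def psi {r : ℕ} (w : Fin r → E → K) : MvPolynomial E K :=
  ∑ B ∈ Finset.univ.powersetCard r,
    MvPolynomial.C (cSq w B) * ∏ e ∈ B, MvPolynomial.X e

end Config

/-!
Pick a basis `S₀` of the matroid and normalize the basis of `W` to `[1 | A]` in the column order
`(S₀, S₀ᶜ)`; the rows of `[-Aᵀ | 1]` are then a basis of `W^⊥`. If `A * Bᵀ = 0` for matrices of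
complementary sizes, then `det (A_S)² det (B_{Tᶜ})² = det (A_T)² det (B_{Sᶜ})²` for all `S, T`:
border `A` and `B` by unit rows so that the product of the bordered matrices is block triangular.
With `T = S₀`, where both normalized minors are `1`, this gives `c_{W,S} = c_{W^⊥,Sᶜ}`, and the
Laurent identity is the substitution `B ↦ Bᶜ` in the sum defining `ψ_{W^⊥}`.
-/

namespace Config
open Matrix

section BlockMatrices

lemma submatrix_equiv_eq_fromCols {R E ι κ α : Type*} (M : Matrix α E R) (ρ : ι ⊕ κ ≃ E) :
    M.submatrix id ρ = fromCols (M.submatrix id (ρ ∘ Sum.inl)) (M.submatrix id (ρ ∘ Sum.inr)) := by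
  ext i (j | j) <;> rfl

variable {R : Type*} [CommRing R] {E ι κ : Type*}

lemma linearIndependent_of_submatrix_eq_one [Fintype ι] [DecidableEq ι] {A : Matrix ι E R}
    {f : ι → E} (h : A.submatrix id f = 1) : LinearIndependent R A := by
  apply LinearIndependent.of_comp (LinearMap.funLeft R R f)
  have : LinearMap.funLeft R R f ∘ A = (1 : Matrix ι ι R).row := by rw [← h]; rfl
  rw [this]
  exact linearIndependent_rows_of_isUnit isUnit_one

lemma sq_det_submatrix_equiv_eq [Fintype ι] [DecidableEq ι] (M : Matrix ι E R) (e₁ e₂ : ι ≃ E) :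
    (M.submatrix id e₁).det ^ 2 = (M.submatrix id e₂).det ^ 2 := by
  have : M.submatrix id e₁ = (M.submatrix id e₂).submatrix id (e₁.trans e₂.symm) := by
    ext i j; simp
  rw [this, det_permute', mul_pow, ← Int.cast_pow, ← Units.val_pow_eq_pow_val, Int.units_sq]
  simp

lemma mul_transpose_one_submatrix [Fintype E] [DecidableEq E] {α : Type*} (M : Matrix α E R)
    (f : ι → E) : M * ((1 : Matrix E E R).submatrix f id)ᵀ = M.submatrix id f := by
  ext i j; simp [mul_apply, one_apply]

/-- If `w = [1 | A]` in the column order `ρ`, this is `[-Aᵀ | 1]` in the same order. -/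
noncomputable def dualStandardForm [DecidableEq κ] (w : Matrix ι E R) (ρ : ι ⊕ κ ≃ E) :
    Matrix κ E R :=
  (fromCols (-(w.submatrix id (ρ ∘ Sum.inr)))ᵀ 1).submatrix id ρ.symm

lemma dualStandardForm_submatrix_inr [DecidableEq κ] (w : Matrix ι E R) (ρ : ι ⊕ κ ≃ E) :
    (dualStandardForm w ρ).submatrix id (ρ ∘ Sum.inr) = 1 := by
  ext i j; simp [dualStandardForm]

variable [Fintype ι] [Fintype κ] [DecidableEq ι] [DecidableEq κ]

lemma mul_transpose_dualStandardForm [Fintype E] {w : Matrix ι E R} {ρ : ι ⊕ κ ≃ E}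
    (hw : w.submatrix id (ρ ∘ Sum.inl) = 1) : w * (dualStandardForm w ρ)ᵀ = 0 := by
  have : w * (dualStandardForm w ρ)ᵀ =
      w.submatrix id ρ * ((dualStandardForm w ρ).submatrix id ρ)ᵀ := by
    rw [transpose_submatrix, submatrix_mul_equiv, submatrix_id_id]
  rw [this, submatrix_equiv_eq_fromCols w ρ, hw, dualStandardForm, submatrix_submatrix,
    Function.comp_id, Equiv.symm_comp_self, submatrix_id_id, transpose_fromCols,
    transpose_transpose, transpose_one, fromCols_mul_fromRows, Matrix.one_mul, Matrix.mul_one,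
    neg_add_cancel]

variable [DecidableEq E]

lemma det_fromRows_one_submatrix_inr (A : Matrix ι E R) (ρ : ι ⊕ κ ≃ E) :
    ((fromRows A ((1 : Matrix E E R).submatrix (ρ ∘ Sum.inr) id)).submatrix id ρ).det =
      (A.submatrix id (ρ ∘ Sum.inl)).det := by
  have : (fromRows A ((1 : Matrix E E R).submatrix (ρ ∘ Sum.inr) id)).submatrix id ρ =
      fromBlocks (A.submatrix id (ρ ∘ Sum.inl)) (A.submatrix id (ρ ∘ Sum.inr)) 0 1 := by
    ext (i | i) (j | j) <;> simp [one_apply]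
  rw [this, det_fromBlocks_zero₂₁, det_one, mul_one]

lemma det_fromRows_one_submatrix_inl (B : Matrix κ E R) (ρ : ι ⊕ κ ≃ E) :
    ((fromRows ((1 : Matrix E E R).submatrix (ρ ∘ Sum.inl) id) B).submatrix id ρ).det =
      (B.submatrix id (ρ ∘ Sum.inr)).det := by
  have : (fromRows ((1 : Matrix E E R).submatrix (ρ ∘ Sum.inl) id) B).submatrix id ρ =
      fromBlocks 1 0 (B.submatrix id (ρ ∘ Sum.inl)) (B.submatrix id (ρ ∘ Sum.inr)) := by
    ext (i | i) (j | j) <;> simp [one_apply]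
  rw [this, det_fromBlocks_zero₁₂, det_one, one_mul]

theorem sq_det_mul_sq_det_compl [Fintype E] (A : Matrix ι E R) (B : Matrix κ E R)
    (hAB : A * Bᵀ = 0) (ρ π : ι ⊕ κ ≃ E) :
    (A.submatrix id (ρ ∘ Sum.inl)).det ^ 2 * (B.submatrix id (π ∘ Sum.inr)).det ^ 2 =
      (A.submatrix id (π ∘ Sum.inl)).det ^ 2 * (B.submatrix id (ρ ∘ Sum.inr)).det ^ 2 := by
  set C := fromRows A ((1 : Matrix E E R).submatrix (ρ ∘ Sum.inr) id)
  set D := fromRows ((1 : Matrix E E R).submatrix (π ∘ Sum.inl) id) B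
  -- `C * Dᵀ` is block triangular with diagonal blocks `A_{π ι}` and `(B_{ρ κ})ᵀ`, `C` is block
  -- triangular in the column order `ρ` and `D` in the column order `π`.
  have hdet : (C.submatrix id π).det * (D.submatrix id π).det =
      (A.submatrix id (π ∘ Sum.inl)).det * (B.submatrix id (ρ ∘ Sum.inr)).det := by
    rw [← det_transpose (D.submatrix id π), ← det_mul, transpose_submatrix, submatrix_mul_equiv,
      submatrix_id_id, transpose_fromRows, fromRows_mul_fromCols, hAB, det_fromBlocks_zero₁₂,
      mul_transpose_one_submatrix, ← transpose_transpose ((1 : Matrix E E R).submatrix _ id * _),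
      transpose_mul, transpose_transpose, mul_transpose_one_submatrix, det_transpose]
  rw [← det_fromRows_one_submatrix_inr A ρ, ← det_fromRows_one_submatrix_inl B π,
    sq_det_submatrix_equiv_eq C ρ π, ← mul_pow, hdet, mul_pow]

end BlockMatrices

variable {K : Type} [Field K] {E : Type} [Fintype E]

section Bases

variable {r m : ℕ}

lemma isBasisOf_of_linearIndependent {W : Submodule K (E → K)} {w : Fin r → E → K}
    (hli : LinearIndependent K w) (hmem : ∀ i, w i ∈ W) (hW : Module.finrank K W = r) :
    IsBasisOf w W :=
  ⟨hli, Submodule.eq_of_le_of_finrank_eq (Submodule.span_le.2 (Set.range_subset_iff.2 hmem))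
    (by rw [finrank_span_eq_card hli, Fintype.card_fin, hW])⟩

lemma finrank_ker_mulVecLin {w : Matrix (Fin r) E K} (hw : LinearIndependent K w) :
    Module.finrank K (LinearMap.ker w.mulVecLin) = Fintype.card E - r := by
  have := LinearMap.finrank_range_add_finrank_ker w.mulVecLin
  rw [← Matrix.rank, rank_eq_finrank_span_row, row, finrank_span_eq_card hw,
    Module.finrank_fintype_fun_eq_card, Fintype.card_fin] at this
  omega

lemma eq_ker_mulVecLin_of_perp {W Wperp : Submodule K (E → K)} {w : Matrix (Fin r) E K}
    (hw : Submodule.span K (Set.range w) = W)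
    (hperp : ∀ v : E → K, v ∈ Wperp ↔ ∀ u ∈ W, ∑ e : E, u e * v e = 0) :
    Wperp = LinearMap.ker w.mulVecLin := by
  ext v
  rw [hperp, LinearMap.mem_ker, mulVecLin_apply, ← hw]
  constructor
  · intro h
    funext i
    exact h (w i) (Submodule.subset_span ⟨i, rfl⟩)
  · intro h u hu
    induction hu using Submodule.span_induction with
    | mem u hu =>
      obtain ⟨i, rfl⟩ := hu
      exact congrFun h i
    | zero => simp
    | add x y _ _ hx hy => simp [add_mul, Finset.sum_add_distrib, hx, hy]
    | smul a x _ hx => simp [mul_assoc, ← Finset.mul_sum, hx]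

theorem isBasisOf_dualStandardForm {W Wperp : Submodule K (E → K)} {w : Matrix (Fin r) E K}
    {ρ : Fin r ⊕ Fin m ≃ E} (hw : IsBasisOf w W) (hw₁ : w.submatrix id (ρ ∘ Sum.inl) = 1)
    (hperp : ∀ v : E → K, v ∈ Wperp ↔ ∀ u ∈ W, ∑ e : E, u e * v e = 0) :
    IsBasisOf (dualStandardForm w ρ) Wperp := by
  have hker := eq_ker_mulVecLin_of_perp hw.2 hperp
  have hm : Fintype.card E - r = m := by
    have := Fintype.card_congr ρ
    simp only [Fintype.card_sum, Fintype.card_fin] at this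
    omega
  refine isBasisOf_of_linearIndependent
    (linearIndependent_of_submatrix_eq_one (dualStandardForm_submatrix_inr w ρ)) (fun j => ?_)
    (by rw [hker, finrank_ker_mulVecLin hw.1, hm])
  rw [hker, LinearMap.mem_ker, mulVecLin_apply]
  ext i
  simpa [mul_apply, mulVec, dotProduct] using
    congrFun (congrFun (mul_transpose_dualStandardForm hw₁) i) j

/-- The coordinate functionals indexed by a suitable `S` form a basis of the dual of `W`;
`w` is its dual basis. -/
theorem exists_rows_mem_submatrix_eq_one {W : Submodule K (E → K)}
    (hr : Module.finrank K W = r) :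
    ∃ (S : Finset E) (hS : S.card = r) (w : Matrix (Fin r) E K),
      (∀ i, w i ∈ W) ∧ w.submatrix id (fun i => ((S.equivFinOfCardEq hS).symm i : E)) = 1 := by
  classical
  let ε : E → Module.Dual K W := fun e => (LinearMap.proj e).comp W.subtype
  have hspan : ⊤ ≤ Submodule.span K (Set.range ε) := fun φ _ =>
    mem_span_of_iInf_ker_le_ker fun u hu => by
      have : u = 0 := Subtype.ext (funext fun e => by
        simpa [ε] using (Submodule.mem_iInf _).1 hu e)
      simp [this]
  obtain ⟨b, -, -, hb, hli⟩ :=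
    exists_linearIndepOn_extension (linearIndepOn_empty K ε) (Set.empty_subset Set.univ)
  let B : Module.Basis b K (Module.Dual K W) := Module.Basis.mk hli (hspan.trans (by
    rw [← Set.image_univ, ← Set.image_eq_range]
    exact Submodule.span_le.2 hb))
  have hcard : b.toFinset.card = r := by
    rw [Set.toFinset_card, ← Module.finrank_eq_card_basis B, Subspace.dual_finrank_eq, hr]
  let σ : b ≃ Fin r :=
    (Equiv.subtypeEquivRight fun _ => Set.mem_toFinset.symm).trans
      (b.toFinset.equivFinOfCardEq hcard)
  refine ⟨b.toFinset, hcard,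
    fun i => ((Module.evalEquiv K W).symm (B.dualBasis (σ.symm i)) : E → K),
    fun i => Submodule.coe_mem _, ?_⟩
  ext i j
  have hB : ∀ x, B x = ε x := Module.Basis.mk_apply _ _
  calc _ = B (σ.symm j) ((Module.evalEquiv K W).symm (B.dualBasis (σ.symm i))) := by
        rw [hB]; rfl
    _ = B.dualBasis (σ.symm i) (B (σ.symm j)) := Module.apply_evalEquiv_symm_apply ..
    _ = _ := by rw [Module.Basis.dualBasis_apply_self, one_apply]; simp [eq_comm]

end Bases

lemma eval₂_psi {F : Type*} [CommSemiring F] (f : K →+* F) (x : E → F) {r : ℕ}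
    (w : Fin r → E → K) :
    MvPolynomial.eval₂ f x (psi w) =
      ∑ S ∈ Finset.univ.powersetCard r, f (cSq w S) * ∏ e ∈ S, x e := by
  simp [psi, MvPolynomial.eval₂_sum, MvPolynomial.eval₂_prod]

variable [DecidableEq E]

section Minors

variable {r m : ℕ}

/-- `E` listed as `S` followed by `Sᶜ`, each in the order used by `cSq`. -/
noncomputable def splitEquiv (S : Finset E) (hS : S.card = r) (hSc : Sᶜ.card = m) :
    Fin r ⊕ Fin m ≃ E :=
  (Equiv.sumCongr (S.equivFinOfCardEq hS).symm
    ((Sᶜ.equivFinOfCardEq hSc).symm.trans (Equiv.subtypeEquivRight fun _ => Finset.mem_compl))).trans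
    (Equiv.sumCompl (· ∈ S))

lemma cSq_eq_sq_det_submatrix_inl (w : Matrix (Fin r) E K) {S : Finset E} (hS : S.card = r)
    (hSc : Sᶜ.card = m) : cSq w S = (w.submatrix id (splitEquiv S hS hSc ∘ Sum.inl)).det ^ 2 := by
  simp only [cSq, dif_pos hS]; rfl

lemma cSq_compl_eq_sq_det_submatrix_inr (w : Matrix (Fin m) E K) {S : Finset E}
    (hS : S.card = r) (hSc : Sᶜ.card = m) :
    cSq w Sᶜ = (w.submatrix id (splitEquiv S hS hSc ∘ Sum.inr)).det ^ 2 := by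
  simp only [cSq, dif_pos hSc]; rfl

theorem cSq_mul_cSq_compl (w : Matrix (Fin r) E K) (w' : Matrix (Fin m) E K)
    (hww' : w * w'ᵀ = 0) {S T : Finset E} (hS : S.card = r) (hSc : Sᶜ.card = m)
    (hT : T.card = r) (hTc : Tᶜ.card = m) :
    cSq w S * cSq w' Tᶜ = cSq w T * cSq w' Sᶜ := by
  rw [cSq_eq_sq_det_submatrix_inl w hS hSc, cSq_eq_sq_det_submatrix_inl w hT hTc,
    cSq_compl_eq_sq_det_submatrix_inr w' hS hSc, cSq_compl_eq_sq_det_submatrix_inr w' hT hTc]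
  exact sq_det_mul_sq_det_compl w w' hww' _ _

theorem eval₂_psi_eq_prod_mul_eval₂_inv {F : Type*} [Field F] (f : K →+* F) {x : E → F}
    (hx : ∀ e, x e ≠ 0) {w : Fin r → E → K} {w' : Fin m → E → K} (hm : r + m = Fintype.card E)
    (hc : ∀ S : Finset E, S.card = r → cSq w S = cSq w' Sᶜ) :
    MvPolynomial.eval₂ f x (psi w') =
      (∏ e, x e) * MvPolynomial.eval₂ f (fun e => (x e)⁻¹) (psi w) := by
  rw [eval₂_psi, eval₂_psi, Finset.mul_sum]
  refine Finset.sum_nbij' compl compl ?_ ?_ (fun _ _ => compl_compl _) (fun _ _ => compl_compl _) ?_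
  · intro B hB
    simp only [Finset.mem_powersetCard_univ, Finset.card_compl] at hB ⊢
    omega
  · intro S hS
    simp only [Finset.mem_powersetCard_univ, Finset.card_compl] at hS ⊢
    omega
  · intro B hB
    rw [Finset.mem_powersetCard_univ] at hB
    have hprod : ∏ e ∈ B, x e = (∏ e, x e) * ∏ e ∈ Bᶜ, (x e)⁻¹ := by
      rw [← Finset.prod_mul_prod_compl B x, Finset.prod_inv_distrib, mul_assoc,
        mul_inv_cancel₀ (Finset.prod_ne_zero_iff.2 fun e _ => hx e), mul_one]
    rw [hc Bᶜ (by rw [Finset.card_compl, hB]; omega), compl_compl, hprod]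
    ring

end Minors

/-- **Theorem (Dual configuration polynomials).**
Let `W ⊆ K^E` realize a matroid of rank `r` and let `W^⊥` be the dual configuration
(the orthogonal complement of `W` for the standard bilinear form).  Then there are
bases of `W` and of `W^⊥` such that `c_{W,S} = c_{W^⊥,E∖S}` for every `S ⊆ E` with
`|S| = r`; consequently, in the field of fractions of `K[x_e : e ∈ E]`,
`ψ_{W^⊥}(x) = (∏ₑ x_e) · ψ_W((x_e⁻¹)ₑ)`. -/
theorem dual_configuration_polynomial
    (W Wperp : Submodule K (E → K)) (r : ℕ) (hr : Module.finrank K W = r)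
    (hperp : ∀ v : E → K, v ∈ Wperp ↔ ∀ u ∈ W, ∑ e : E, u e * v e = 0) :
    ∃ (w : Fin r → E → K) (w' : Fin (Fintype.card E - r) → E → K),
      IsBasisOf w W ∧ IsBasisOf w' Wperp ∧
      (∀ S : Finset E, S.card = r → cSq w S = cSq w' Sᶜ) ∧
      algebraMap (MvPolynomial E K) (FractionRing (MvPolynomial E K)) (psi w') =
        (∏ e : E,
          algebraMap (MvPolynomial E K) (FractionRing (MvPolynomial E K))
            (MvPolynomial.X e)) *
        MvPolynomial.eval₂
          ((algebraMap (MvPolynomial E K) (FractionRing (MvPolynomial E K))).comp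
            MvPolynomial.C)
          (fun e =>
            (algebraMap (MvPolynomial E K) (FractionRing (MvPolynomial E K))
              (MvPolynomial.X e))⁻¹)
          (psi w) := by
  obtain ⟨S₀, hS₀, w, hwW, hw₁⟩ := exists_rows_mem_submatrix_eq_one hr
  have hS₀c : S₀ᶜ.card = Fintype.card E - r := by rw [Finset.card_compl, hS₀]
  set ρ := splitEquiv S₀ hS₀ hS₀c
  replace hw₁ : w.submatrix id (ρ ∘ Sum.inl) = 1 := hw₁
  set w' := dualStandardForm w ρ
  have hw : IsBasisOf w W :=
    isBasisOf_of_linearIndependent (linearIndependent_of_submatrix_eq_one hw₁) hwW hr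
  have hc : ∀ S : Finset E, S.card = r → cSq w S = cSq w' Sᶜ := fun S hS => by
    have := cSq_mul_cSq_compl w w' (mul_transpose_dualStandardForm hw₁) hS
      (by rw [Finset.card_compl, hS]) hS₀ hS₀c
    rw [cSq_eq_sq_det_submatrix_inl w hS₀ hS₀c, cSq_compl_eq_sq_det_submatrix_inr w' hS₀ hS₀c,
      hw₁, dualStandardForm_submatrix_inr] at this
    simpa only [det_one, one_pow, mul_one, one_mul] using this
  refine ⟨w, w', hw, isBasisOf_dualStandardForm hw hw₁ hperp, hc, ?_⟩
  have hr' : r + (Fintype.card E - r) = Fintype.card E := by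
    simpa using Fintype.card_congr ρ
  conv_lhs => rw [← MvPolynomial.eval₂_eta (psi w'), MvPolynomial.eval₂_comp_left]
  exact eval₂_psi_eq_prod_mul_eval₂_inv _ (fun e => (map_ne_zero_iff _
    (IsFractionRing.injective _ _)).2 (MvPolynomial.X_ne_zero e)) hr' hc

end Config
end

section
/- Let K be a field, W ⊆ K^E a realization of a matroid M, and e ∈ E. Then, up to nonzero square constant factors (i.e., for suitable compatible choices of bases of W, W∖e and W/e), the configuration polynomial satisfies: ψ_W = ψ_{W∖e} = ψ_{W/e} if e is a loop of M; ψ_W = x_e · ψ_{W∖e} = x_e · ψ_{W/e} if e is a coloop of M; and ψ_W = ψ_{W∖e} + x_e · ψ_{W/e} if e is neither a loop nor a coloop. In particular, in the last case ∂ψ_W/∂x_e = ψ_{W/e} and ψ_W|_{x_e=0} = ψ_{W∖e}. -/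
open scoped BigOperators

namespace Config

variable {K : Type} [Field K] {E : Type} [Fintype E] [DecidableEq E]

/-- The coordinate functional `e^∨` of `K^E` restricted to a subspace `W ⊆ K^E`. -/
noncomputable def coordFun (W : Submodule K (E → K)) (e : E) : W →ₗ[K] K :=
  (LinearMap.proj e).comp W.subtype

/-- `S ⊆ E` is independent in the matroid `M_W` realized by the configuration `W`:
the restricted coordinate functionals `(e^∨|_W)_{e ∈ S}` are linearly independent. -/
def Indep (W : Submodule K (E → K)) (S : Finset E) : Prop :=
  LinearIndependent K (fun e : S => coordFun W e)

/-- The restriction configuration `W|_F ⊆ K^F`: the image of `W` under the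
coordinate projection `K^E ↠ K^F`. -/
noncomputable def restrictConfig (W : Submodule K (E → K)) (F : Finset E) :
    Submodule K ({x : E // x ∈ F} → K) :=
  W.map (LinearMap.funLeft K K (fun x : {x : E // x ∈ F} => (x : E)))

/-- The deletion configuration `W ∖ F = W|_{E ∖ F} ⊆ K^{E ∖ F}`. -/
noncomputable def deleteConfig (W : Submodule K (E → K)) (F : Finset E) :
    Submodule K ({x : E // x ∉ F} → K) :=
  W.map (LinearMap.funLeft K K (fun x : {x : E // x ∉ F} => (x : E)))

/-- The contraction configuration `W/F = W ∩ K^{E ∖ F} ⊆ K^{E ∖ F}`: the vectors of `W`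
vanishing on `F`, viewed in the coordinates `E ∖ F`. -/
noncomputable def contractConfig (W : Submodule K (E → K)) (F : Finset E) :
    Submodule K ({x : E // x ∉ F} → K) :=
  (W ⊓ LinearMap.ker (LinearMap.funLeft K K (fun x : {x : E // x ∈ F} => (x : E)))).map
    (LinearMap.funLeft K K (fun x : {x : E // x ∉ F} => (x : E)))

/-- `B` is a basis (a maximal independent set) of the matroid `M_W`. -/
def IsBase (W : Submodule K (E → K)) (B : Finset E) : Prop :=
  Indep W B ∧ ∀ S : Finset E, Indep W S → S.card ≤ B.card

/-!
Changing the basis of `W` by a matrix `A` multiplies every `c_{W,B}` by `det A ^ 2`, so `ψ_W` may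
be computed in one well-chosen basis; and since row rank equals column rank, the bases of `M_W`
are exactly the `B` with `c_{W,B} ≠ 0`.

If `e` is not a loop, take `v ∈ W` with `v e = 1` followed by a basis `u` of `W ∩ {x_e = 0}`;
`u` projects to a basis of `W/e`. Split `ψ_W` according to whether `e ∈ B`. Expanding the minors
with `e ∈ B` along the column `e`, which is `(1, 0, …, 0)`, gives `x_e ψ_{W/e}`. The terms with
`e ∉ B` are the maximal minors of the whole basis with `e` deleted: when some base avoids `e` this
family is a basis of `W∖e`, and when `e` is a coloop it is dependent, so these terms vanish and
`W∖e = W/e`. If `e` is a loop, all of `W` vanishes at `e`, every minor containing `e` is zero,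
and again `W∖e = W/e`.
-/
open MvPolynomial

section Minors

variable {F : Type} {r : ℕ}

omit [Fintype E] [DecidableEq E]

theorem cSq_of_card_ne (u : Fin r → E → K) {B : Finset E} (h : B.card ≠ r) : cSq u B = 0 :=
  dif_neg h

noncomputable def equivMapUniv (g : Fin r ↪ E) : Fin r ≃ Finset.univ.map g :=
  (Equiv.subtypeUnivEquiv Finset.mem_univ).symm.trans (Finset.equivMap g Finset.univ)

theorem exists_map_univ_eq {B : Finset E} (h : B.card = r) :
    ∃ g : Fin r ↪ E, Finset.univ.map g = B :=
  ⟨(B.equivFinOfCardEq h).symm.toEmbedding.trans (Function.Embedding.subtype _), by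
    rw [← Finset.map_map, Finset.map_univ_equiv, Finset.univ_eq_attach, Finset.attach_map_val]⟩

theorem sq_det_submatrix_id_equiv {n : Type*} [Fintype n] [DecidableEq n]
    (M : Matrix n n K) (σ : Equiv.Perm n) : (M.submatrix id σ).det ^ 2 = M.det ^ 2 := by
  rw [Matrix.det_permute', mul_pow, ← Int.cast_pow, ← Units.val_pow_eq_pow_val, Int.units_sq,
    Units.val_one, Int.cast_one, one_mul]

theorem cSq_map_univ (u : Fin r → E → K) (g : Fin r ↪ E) :
    cSq u (Finset.univ.map g) = (Matrix.of fun i j => u i (g j)).det ^ 2 := by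
  have h : (Finset.univ.map g).card = r := by simp
  rw [cSq, dif_pos h, ← sq_det_submatrix_id_equiv _ ((equivMapUniv g).trans
    (Finset.equivFinOfCardEq h))]
  congr 2
  ext i j
  simp [equivMapUniv]

theorem cSq_comp (u : Fin r → E → K) (g : F ↪ E) (B : Finset F) :
    cSq (fun i => u i ∘ g) B = cSq u (B.map g) := by
  by_cases h : B.card = r
  · obtain ⟨g₀, rfl⟩ := exists_map_univ_eq h
    rw [Finset.map_map, cSq_map_univ, cSq_map_univ]
    rfl
  · rw [cSq_of_card_ne _ h, cSq_of_card_ne _ (by rwa [Finset.card_map])]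

theorem cSq_matrix_smul (A : Matrix (Fin r) (Fin r) K) (u : Fin r → E → K) (B : Finset E) :
    cSq (fun i => ∑ j, A i j • u j) B = A.det ^ 2 * cSq u B := by
  by_cases h : B.card = r
  · obtain ⟨g, rfl⟩ := exists_map_univ_eq h
    rw [cSq_map_univ, cSq_map_univ, ← mul_pow, ← Matrix.det_mul]
    congr 2
    ext i j
    simp [Matrix.mul_apply, Finset.sum_apply]
  · rw [cSq_of_card_ne _ h, cSq_of_card_ne _ h, mul_zero]

theorem linearIndependent_of_cSq_ne_zero {u : Fin r → E → K} {B : Finset E}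
    (h : cSq u B ≠ 0) : LinearIndependent K u := by
  obtain ⟨g, rfl⟩ := exists_map_univ_eq (not_imp_comm.1 (cSq_of_card_ne u) h)
  rw [cSq_map_univ] at h
  exact .of_comp (LinearMap.funLeft K K g)
    (Matrix.linearIndependent_rows_of_det_ne_zero (pow_ne_zero_iff two_ne_zero |>.1 h))

theorem cSq_ne_zero_iff (u : Fin r → E → K) (B : Finset E) :
    cSq u B ≠ 0 ↔ B.card = r ∧ LinearIndependent K (fun f : B => fun i => u i f) := by
  by_cases h : B.card = r
  · obtain ⟨g, rfl⟩ := exists_map_univ_eq h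
    rw [cSq_map_univ, pow_ne_zero_iff two_ne_zero, ← isUnit_iff_ne_zero,
      ← Matrix.isUnit_iff_isUnit_det, ← Matrix.linearIndependent_cols_iff_isUnit,
      ← linearIndependent_equiv (equivMapUniv g)]
    exact (and_iff_right h).symm
  · simp [cSq_of_card_ne u h, h]

theorem cSq_eq_zero_of_apply_eq_zero {u : Fin r → E → K} {B : Finset E} {e : E} (he : e ∈ B)
    (hu : ∀ i, u i e = 0) : cSq u B = 0 := by
  by_contra h
  obtain ⟨-, hli⟩ := (cSq_ne_zero_iff u B).1 h
  exact hli.ne_zero ⟨e, he⟩ (funext hu)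

/-- Expansion along the column `e`, whose only nonzero entry is the `1` in the row of `v`. -/
theorem cSq_cons_insert [DecidableEq E] {m : ℕ} {v : E → K} {u : Fin m → E → K} {e : E}
    (hv : v e = 1) (hu : ∀ i, u i e = 0) {C : Finset E} (heC : e ∉ C) :
    cSq (Fin.cons v u) (insert e C) = cSq u C := by
  by_cases h : C.card = m
  · obtain ⟨g, rfl⟩ := exists_map_univ_eq h
    have hg : Function.Injective (Fin.cons e g : Fin (m + 1) → E) :=
      Fin.cons_injective_iff.2 ⟨by simpa using heC, g.injective⟩
    have hmap : insert e (Finset.univ.map g) = Finset.univ.map ⟨_, hg⟩ := by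
      ext x; simp [Fin.exists_fin_succ, eq_comm]
    rw [hmap, cSq_map_univ, cSq_map_univ, Matrix.det_succ_column_zero, Fin.sum_univ_succ]
    simp only [Matrix.of_apply, Function.Embedding.coeFn_mk, Fin.cons_zero, Fin.cons_succ, hv,
      hu, Fin.val_zero, pow_zero, one_mul, mul_zero, zero_mul, Finset.sum_const_zero, add_zero,
      Fin.succAbove_zero]
    rfl
  · rw [cSq_of_card_ne _ h, cSq_of_card_ne _ (by rw [Finset.card_insert_of_notMem heC]; omega)]

abbrev deleteCoord (e : E) (u : Fin r → E → K) :
    Fin r → {x // x ∉ ({e} : Finset E)} → K :=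
  fun i => u i ∘ Subtype.val

end Minors

section ColumnRank

omit [DecidableEq E]

variable {r : ℕ}

/-- Row rank equals column rank, so the columns of `u` span `K^r` and contain a basis. -/
theorem exists_cSq_ne_zero {u : Fin r → E → K} (hu : LinearIndependent K u) :
    ∃ B : Finset E, cSq u B ≠ 0 := by
  classical
  let M : Matrix (Fin r) E K := Matrix.of u
  have hspan : Submodule.span K (Set.range M.col) = ⊤ := by
    apply Submodule.eq_top_of_finrank_eq
    rw [← Matrix.rank_eq_finrank_span_cols, LinearIndependent.rank_matrix (M := M) hu,
      Module.finrank_fin_fun, Fintype.card_fin]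
  obtain ⟨b, -, -, hcb, hli⟩ :=
    exists_linearIndepOn_extension (linearIndepOn_empty K M.col) (Set.empty_subset Set.univ)
  rw [Set.image_univ] at hcb
  have hbspan : Submodule.span K (Set.range fun f : b => M.col f) = ⊤ := by
    rw [← Set.image_eq_range, eq_top_iff, ← hspan, Submodule.span_le]
    exact hcb
  refine ⟨b.toFinset, (cSq_ne_zero_iff u _).2 ⟨?_, ?_⟩⟩
  · rw [Set.toFinset_card, linearIndependent_iff_card_eq_finrank_span.1 hli, Set.finrank,
      hbspan, finrank_top, Module.finrank_fin_fun]
  · exact (show LinearIndepOn K M.col ↑b.toFinset by rwa [Set.coe_toFinset])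

end ColumnRank

section Bases

omit [Fintype E] [DecidableEq E]

variable {r : ℕ} {V : Submodule K (E → K)}

theorem IsBasisOf.mem {u : Fin r → E → K} (hu : IsBasisOf u V) (i : Fin r) : u i ∈ V :=
  hu.2 ▸ Submodule.subset_span ⟨i, rfl⟩

theorem IsBasisOf.finrank_eq {u : Fin r → E → K} (hu : IsBasisOf u V) :
    Module.finrank K V = r := by
  rw [← hu.2, finrank_span_eq_card hu.1, Fintype.card_fin]

noncomputable def IsBasisOf.basis {u : Fin r → E → K} (hu : IsBasisOf u V) :
    Module.Basis (Fin r) K V :=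
  (Module.Basis.span hu.1).map (LinearEquiv.ofEq _ _ hu.2)

theorem IsBasisOf.coe_basis {u : Fin r → E → K} (hu : IsBasisOf u V) (i : Fin r) :
    (hu.basis i : E → K) = u i := by
  simp [IsBasisOf.basis, Module.Basis.span_apply]

theorem IsBasisOf.map {G : Type} {u : Fin r → E → K} (hu : IsBasisOf u V)
    (f : (E → K) →ₗ[K] (G → K)) (hf : LinearIndependent K (f ∘ u)) :
    IsBasisOf (f ∘ u) (V.map f) :=
  ⟨hf, by rw [Set.range_comp, ← Submodule.map_span, hu.2]⟩

theorem IsBasisOf.map_tail {G : Type} {m : ℕ} {v : E → K} {u : Fin m → E → K}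
    (hvu : IsBasisOf (Fin.cons v u) V) (f : (E → K) →ₗ[K] (G → K))
    (hu : LinearIndependent K (f ∘ u)) (hvu' : ¬ LinearIndependent K (f ∘ Fin.cons v u)) :
    IsBasisOf (f ∘ u) (V.map f) := by
  rw [Fin.comp_cons, linearIndependent_finCons, not_and, not_not] at hvu'
  refine ⟨hu, ?_⟩
  rw [← hvu.2, Submodule.map_span, ← Set.range_comp, Fin.comp_cons, Fin.range_cons,
    Submodule.span_insert_eq_span (hvu' hu)]

theorem exists_isBasisOf (V : Submodule K (E → K)) [FiniteDimensional K V] :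
    ∃ (m : ℕ) (u : Fin m → E → K), IsBasisOf u V := by
  let b := Module.finBasis K V
  refine ⟨_, V.subtype ∘ b, b.linearIndependent.map' V.subtype V.ker_subtype, ?_⟩
  rw [Set.range_comp, Submodule.span_image, b.span_eq, Submodule.map_top, Submodule.range_subtype]

end Bases

section Psi

omit [DecidableEq E]

variable {r r' : ℕ} {V : Submodule K (E → K)}

theorem psi_eq_of_isBasisOf {u : Fin r → E → K} {u' : Fin r' → E → K}
    (hu : IsBasisOf u V) (hu' : IsBasisOf u' V) :
    ∃ a : K, a ≠ 0 ∧ psi u' = C (a ^ 2) * psi u := by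
  obtain rfl : r' = r := hu'.finrank_eq.symm.trans hu.finrank_eq
  let A := (hu.basis.toMatrix hu'.basis).transpose
  have hu'A : u' = fun i => ∑ j, A i j • u j := by
    ext1 i
    calc u' i = ↑(∑ j, hu.basis.repr (hu'.basis i) j • hu.basis j) := by
          rw [hu.basis.sum_repr, hu'.coe_basis]
      _ = ∑ j, A i j • u j := by
          simp only [Submodule.coe_sum, Submodule.coe_smul, hu.coe_basis, A,
            Matrix.transpose_apply, Module.Basis.toMatrix_apply]
  refine ⟨A.det, ?_, ?_⟩
  · rw [Matrix.det_transpose, ← Module.Basis.det_apply]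
    exact (hu.basis.isUnit_det hu'.basis).ne_zero
  · simp only [psi, hu'A, cSq_matrix_smul, map_mul, Finset.mul_sum, mul_assoc]

end Psi

section Matroid

omit [DecidableEq E]

variable {r : ℕ} {V : Submodule K (E → K)} {u : Fin r → E → K}

omit [Fintype E] in
theorem indep_iff_linearIndependent_cols (hu : IsBasisOf u V) (S : Finset E) :
    Indep V S ↔ LinearIndependent K (fun f : S => fun i => u i f) := by
  have hcols : (fun f : S => fun i => u i f) =
      hu.basis.dualBasis.equivFun.toLinearMap ∘ fun f : S => coordFun V f := by
    ext f i
    simp [Module.Basis.dualBasis_equivFun, coordFun, hu.coe_basis]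
  rw [hcols, LinearMap.linearIndependent_iff _ (LinearEquiv.ker _), Indep]

theorem isBase_iff_cSq_ne_zero (hu : IsBasisOf u V) (B : Finset E) :
    IsBase V B ↔ cSq u B ≠ 0 := by
  have hcSq : ∀ S, cSq u S ≠ 0 ↔ S.card = r ∧ Indep V S := fun S => by
    rw [cSq_ne_zero_iff, indep_iff_linearIndependent_cols hu]
  have hle : ∀ S, Indep V S → S.card ≤ r := fun S hS => by
    simpa using ((indep_iff_linearIndependent_cols hu S).1 hS).fintype_card_le_finrank
  obtain ⟨B₀, hB₀⟩ := exists_cSq_ne_zero hu.1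
  rw [hcSq] at hB₀ ⊢
  constructor
  · rintro ⟨hB, hmax⟩
    exact ⟨le_antisymm (hle B hB) (hB₀.1 ▸ hmax B₀ hB₀.2), hB⟩
  · rintro ⟨hcard, hB⟩
    exact ⟨hB, fun S hS => hcard ▸ hle S hS⟩

end Matroid

section Splitting

variable {M : Type} [AddCommMonoid M] (e : E) (φ : Finset E → M)

theorem sum_powersetCard_subtype_notMem (n : ℕ) :
    ∑ B ∈ Finset.univ.powersetCard n, φ (B.map (.subtype (· ∉ ({e} : Finset E)))) =
      ∑ B ∈ (Finset.univ.powersetCard n).filter (e ∉ ·), φ B := by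
  have hB : ∀ {B : Finset E}, e ∉ B → ∀ x ∈ B, x ∉ ({e} : Finset E) :=
    fun heB x hx hxe => heB (Finset.mem_singleton.1 hxe ▸ hx)
  refine Finset.sum_nbij' (fun B => B.map (.subtype _))
    (fun B => B.subtype (· ∉ ({e} : Finset E))) ?_ ?_ ?_ ?_ fun _ _ => rfl
  · intro B hB
    simp_all [Finset.mem_powersetCard]
  · intro B hB'
    simp only [Finset.mem_filter, Finset.mem_powersetCard] at hB'
    rw [Finset.mem_powersetCard, Finset.card_subtype, Finset.filter_true_of_mem (hB hB'.2)]
    exact ⟨Finset.subset_univ _, hB'.1.2⟩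
  · intro B _
    exact Finset.map_injective (.subtype _)
      (Finset.subtype_map_of_mem fun x hx => Finset.property_of_mem_map_subtype B hx)
  · intro B hB'
    exact Finset.subtype_map_of_mem (hB (Finset.mem_filter.1 hB').2)

theorem sum_filter_mem_powersetCard_succ (n : ℕ) :
    ∑ B ∈ (Finset.univ.powersetCard (n + 1)).filter (e ∈ ·), φ B =
      ∑ B ∈ (Finset.univ.powersetCard n).filter (e ∉ ·), φ (insert e B) := by
  refine (Finset.sum_nbij' (fun B => insert e B) (fun B => B.erase e) ?_ ?_ ?_ ?_
    fun _ _ => rfl).symm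
  · intro B hB
    simp_all [Finset.mem_powersetCard, Finset.card_insert_of_notMem]
  · intro B hB
    simp_all [Finset.mem_powersetCard, Finset.card_erase_of_mem]
  · intro B hB
    simp_all
  · intro B hB
    simp_all [Finset.insert_erase]

end Splitting

section Decomposition

variable {r m : ℕ} {e : E}

theorem sum_filter_notMem_eq_rename_psi (u : Fin r → E → K) (e : E) :
    ∑ B ∈ (Finset.univ.powersetCard r).filter (e ∉ ·), C (cSq u B) * ∏ f ∈ B, X f =
      rename Subtype.val (psi (deleteCoord e u)) := by
  rw [← sum_powersetCard_subtype_notMem, psi, map_sum]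
  refine Finset.sum_congr rfl fun B _ => ?_
  rw [map_mul, rename_C, map_prod, Finset.prod_map, ← cSq_comp]
  simp only [rename_X]
  rfl

theorem sum_filter_mem_eq_X_mul_rename_psi {v : E → K} {u : Fin m → E → K} (hv : v e = 1)
    (hu : ∀ i, u i e = 0) :
    ∑ B ∈ (Finset.univ.powersetCard (m + 1)).filter (e ∈ ·),
        C (cSq (Fin.cons v u) B) * ∏ f ∈ B, X f =
      X e * rename Subtype.val (psi (deleteCoord e u)) := by
  rw [sum_filter_mem_powersetCard_succ, ← sum_filter_notMem_eq_rename_psi, Finset.mul_sum]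
  refine Finset.sum_congr rfl fun B hB => ?_
  have heB : e ∉ B := (Finset.mem_filter.1 hB).2
  rw [cSq_cons_insert hv hu heB, Finset.prod_insert heB]
  ring

theorem psi_eq_sum_filter_mem_add_sum_filter_notMem (u : Fin r → E → K) (e : E) :
    psi u =
      ∑ B ∈ (Finset.univ.powersetCard r).filter (e ∈ ·), C (cSq u B) * ∏ f ∈ B, X f +
        ∑ B ∈ (Finset.univ.powersetCard r).filter (e ∉ ·), C (cSq u B) * ∏ f ∈ B, X f :=
  (Finset.sum_filter_add_sum_filter_not _ _ _).symm

theorem psi_eq_rename_psi_of_apply_eq_zero {u : Fin r → E → K} (hu : ∀ i, u i e = 0) :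
    psi u = rename Subtype.val (psi (deleteCoord e u)) := by
  rw [psi_eq_sum_filter_mem_add_sum_filter_notMem u e, sum_filter_notMem_eq_rename_psi,
    Finset.sum_eq_zero fun B hB => ?_, zero_add]
  rw [cSq_eq_zero_of_apply_eq_zero (Finset.mem_filter.1 hB).2 hu, map_zero, zero_mul]

theorem psi_cons {v : E → K} {u : Fin m → E → K} (hv : v e = 1) (hu : ∀ i, u i e = 0) :
    psi (Fin.cons v u) =
      rename Subtype.val (psi (deleteCoord e (Fin.cons v u))) +
        X e * rename Subtype.val (psi (deleteCoord e u)) := by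
  rw [psi_eq_sum_filter_mem_add_sum_filter_notMem _ e, sum_filter_mem_eq_X_mul_rename_psi hv hu,
    sum_filter_notMem_eq_rename_psi, add_comm]

omit [DecidableEq E] in
theorem psi_eq_zero_of_not_linearIndependent {u : Fin r → E → K}
    (hu : ¬ LinearIndependent K u) : psi u = 0 :=
  Finset.sum_eq_zero fun B _ => by
    rw [not_imp_comm.1 linearIndependent_of_cSq_ne_zero hu, map_zero, zero_mul]

omit [Fintype E] [DecidableEq E] in
theorem pderiv_rename_val (p : MvPolynomial {x // x ∉ ({e} : Finset E)} K) :
    pderiv e (rename Subtype.val p) = 0 := by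
  induction p using MvPolynomial.induction_on with
  | C a => rw [rename_C, pderiv_C]
  | add p q hp hq => rw [map_add, map_add, hp, hq, add_zero]
  | mul_X p x hp =>
    rw [map_mul, rename_X, pderiv_mul, hp, pderiv_X_of_ne, mul_zero, zero_mul, add_zero]
    simpa using x.2

omit [Fintype E] in
theorem aeval_ite_rename_val (p : MvPolynomial {x // x ∉ ({e} : Finset E)} K) :
    aeval (fun f => if f = e then 0 else X f) (rename Subtype.val p) = rename Subtype.val p := by
  rw [aeval_rename, rename_eq_aeval]
  congr 1
  ext x
  simp [show (x : E) ≠ e by simpa using x.2]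

end Decomposition

section Configurations

variable {r : ℕ} {W : Submodule K (E → K)} {e : E}

omit [Fintype E] [DecidableEq E] in
theorem indep_singleton_iff : Indep W {e} ↔ ∃ x ∈ W, x e ≠ 0 := by
  change LinearIndepOn K (coordFun W) ↑({e} : Finset E) ↔ _
  rw [Finset.coe_singleton, linearIndepOn_singleton_iff, Ne, LinearMap.ext_iff]
  simp [coordFun]

omit [Fintype E] [DecidableEq E] in
theorem mem_ker_funLeft_singleton {x : E → K} :
    x ∈ LinearMap.ker (LinearMap.funLeft K K
      (Subtype.val : {f // f ∈ ({e} : Finset E)} → E)) ↔ x e = 0 := by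
  simp [funext_iff, LinearMap.funLeft_apply]

omit [Fintype E] in
theorem linearIndependent_deleteCoord_of_apply_eq_zero {u : Fin r → E → K}
    (hu : LinearIndependent K u) (h0 : ∀ i, u i e = 0) :
    LinearIndependent K (deleteCoord e u) := by
  have hspan : Submodule.span K (Set.range u) ≤ LinearMap.ker (LinearMap.proj e) :=
    Submodule.span_le.2 (Set.range_subset_iff.2 h0)
  refine hu.map (f := LinearMap.funLeft K K Subtype.val)
    (Submodule.disjoint_def.2 fun x hx hker => funext fun f => ?_)
  by_cases hf : f = e
  · exact hf ▸ hspan hx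
  · exact congrFun hker ⟨f, by simpa using hf⟩

theorem linearIndependent_deleteCoord_iff {u : Fin r → E → K} (hu : IsBasisOf u W) :
    LinearIndependent K (deleteCoord e u) ↔ ∃ B, IsBase W B ∧ e ∉ B := by
  constructor
  · intro hli
    obtain ⟨B, hB⟩ := exists_cSq_ne_zero hli
    refine ⟨_, (isBase_iff_cSq_ne_zero hu _).2 (by rwa [← cSq_comp]),
      Finset.notMem_map_subtype_of_not_property _ (by simp)⟩
  · rintro ⟨B, hB, heB⟩
    rw [isBase_iff_cSq_ne_zero hu,
      ← Finset.subtype_map_of_mem (p := (· ∉ ({e} : Finset E))) fun x hx hxe =>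
        heB (Finset.mem_singleton.1 hxe ▸ hx), ← cSq_comp] at hB
    exact linearIndependent_of_cSq_ne_zero hB

theorem exists_isBasisOf_cons (h : ∃ x ∈ W, x e ≠ 0) :
    ∃ (m : ℕ) (v : E → K) (u : Fin m → E → K), v e = 1 ∧ (∀ i, u i e = 0) ∧
      IsBasisOf (Fin.cons v u) W ∧ IsBasisOf (deleteCoord e u) (contractConfig W {e}) := by
  obtain ⟨x, hxW, hxe⟩ := h
  set v := (x e)⁻¹ • x
  have hvW : v ∈ W := W.smul_mem _ hxW
  have hve : v e = 1 := by simp [v, hxe]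
  set W₀ := W ⊓ LinearMap.ker (LinearMap.funLeft K K
    (Subtype.val : {f // f ∈ ({e} : Finset E)} → E))
  obtain ⟨m, u, hu⟩ := exists_isBasisOf W₀
  have hu0 : ∀ i, u i e = 0 := fun i => mem_ker_funLeft_singleton.1 (hu.mem i).2
  refine ⟨m, v, u, hve, hu0, ⟨?_, ?_⟩, hu.map (LinearMap.funLeft K K Subtype.val)
    (linearIndependent_deleteCoord_of_apply_eq_zero hu.1 hu0)⟩
  · rw [linearIndependent_finCons, hu.2]
    exact ⟨hu.1, fun hv => by simp [mem_ker_funLeft_singleton.1 hv.2] at hve⟩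
  · rw [Fin.range_cons, Submodule.span_insert, hu.2]
    refine le_antisymm (sup_le ((Submodule.span_singleton_le_iff_mem _ _).2 hvW) inf_le_left)
      fun y hy => ?_
    have hy₀ : y - y e • v ∈ W₀ :=
      ⟨W.sub_mem hy (W.smul_mem _ hvW), mem_ker_funLeft_singleton.2 (by simp [hve])⟩
    exact Submodule.mem_sup.2
      ⟨y e • v, Submodule.mem_span_singleton.2 ⟨y e, rfl⟩, _, hy₀, add_sub_cancel _ _⟩

end Configurations

section DeletionContraction

variable {W : Submodule K (E → K)} {e : E} {r rd rc : ℕ} {w : Fin r → E → K}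
  {wd : Fin rd → {x : E // x ∉ ({e} : Finset E)} → K}
  {wc : Fin rc → {x : E // x ∉ ({e} : Finset E)} → K}

theorem psi_deletion_contraction_loop (hw : IsBasisOf w W)
    (hwd : IsBasisOf wd (deleteConfig W {e})) (hwc : IsBasisOf wc (contractConfig W {e}))
    (he : ¬ Indep W {e}) :
    ∃ a b : K, a ≠ 0 ∧ b ≠ 0 ∧
      psi w = C (a ^ 2) * rename Subtype.val (psi wd) ∧
      psi w = C (b ^ 2) * rename Subtype.val (psi wc) := by
  simp only [indep_singleton_iff, not_exists, not_and, not_not] at he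
  have hw0 : ∀ i, w i e = 0 := fun i => he _ (hw.mem i)
  have hdel : IsBasisOf (deleteCoord e w) (deleteConfig W {e}) :=
    hw.map (LinearMap.funLeft K K Subtype.val)
      (linearIndependent_deleteCoord_of_apply_eq_zero hw.1 hw0)
  have hcon : contractConfig W {e} = deleteConfig W {e} := by
    rw [contractConfig, deleteConfig,
      inf_eq_left.2 fun x hx => mem_ker_funLeft_singleton.2 (he x hx)]
  obtain ⟨a, ha, hwd'⟩ := psi_eq_of_isBasisOf hwd hdel
  obtain ⟨b, hb, hwc'⟩ := psi_eq_of_isBasisOf hwc (hcon ▸ hdel)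
  rw [psi_eq_rename_psi_of_apply_eq_zero hw0]
  exact ⟨a, b, ha, hb, by rw [hwd', map_mul, rename_C], by rw [hwc', map_mul, rename_C]⟩

theorem psi_deletion_contraction_coloop (hw : IsBasisOf w W)
    (hwd : IsBasisOf wd (deleteConfig W {e})) (hwc : IsBasisOf wc (contractConfig W {e}))
    (he : ∀ B : Finset E, IsBase W B → e ∈ B) :
    ∃ a b : K, a ≠ 0 ∧ b ≠ 0 ∧
      psi w = C (a ^ 2) * X e * rename Subtype.val (psi wd) ∧
      psi w = C (b ^ 2) * X e * rename Subtype.val (psi wc) := by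
  -- No base avoids `e`, so deleting `e` makes every basis of `W` dependent; hence `W∖e = W/e`.
  have hdep : ∀ {n} {u : Fin n → E → K}, IsBasisOf u W →
      ¬ LinearIndependent K (deleteCoord e u) := fun hu hli => by
    obtain ⟨B, hB, heB⟩ := (linearIndependent_deleteCoord_iff hu).1 hli
    exact heB (he B hB)
  have hnl : ∃ x ∈ W, x e ≠ 0 := by
    by_contra! h0
    exact hdep hw (linearIndependent_deleteCoord_of_apply_eq_zero hw.1 fun i => h0 _ (hw.mem i))
  obtain ⟨m, v, u, hve, hu0, hvu, hcon⟩ := exists_isBasisOf_cons hnl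
  have hdel : IsBasisOf (deleteCoord e u) (deleteConfig W {e}) :=
    hvu.map_tail (LinearMap.funLeft K K Subtype.val) hcon.1 (hdep hvu)
  have hpsi : psi (Fin.cons v u) = X e * rename Subtype.val (psi (deleteCoord e u)) := by
    rw [psi_cons hve hu0, psi_eq_zero_of_not_linearIndependent (hdep hvu), map_zero, zero_add]
  obtain ⟨c, hc, hw'⟩ := psi_eq_of_isBasisOf hvu hw
  obtain ⟨a, ha, hwd'⟩ := psi_eq_of_isBasisOf hwd hdel
  obtain ⟨b, hb, hwc'⟩ := psi_eq_of_isBasisOf hwc hcon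
  refine ⟨c * a, c * b, mul_ne_zero hc ha, mul_ne_zero hc hb, ?_, ?_⟩
  · rw [hw', hpsi, hwd', map_mul, rename_C, mul_pow, C_mul]
    ring
  · rw [hw', hpsi, hwc', map_mul, rename_C, mul_pow, C_mul]
    ring

theorem psi_deletion_contraction_of_indep_of_not_coloop (hw : IsBasisOf w W)
    (hwd : IsBasisOf wd (deleteConfig W {e})) (hwc : IsBasisOf wc (contractConfig W {e}))
    (he : Indep W {e}) (he' : ¬ ∀ B : Finset E, IsBase W B → e ∈ B) :
    ∃ a b : K, a ≠ 0 ∧ b ≠ 0 ∧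
      psi w = C (a ^ 2) * rename Subtype.val (psi wd)
        + C (b ^ 2) * X e * rename Subtype.val (psi wc) := by
  obtain ⟨m, v, u, hve, hu0, hvu, hcon⟩ := exists_isBasisOf_cons (indep_singleton_iff.1 he)
  push Not at he'
  have hdel : IsBasisOf (deleteCoord e (Fin.cons v u)) (deleteConfig W {e}) :=
    hvu.map (LinearMap.funLeft K K Subtype.val) ((linearIndependent_deleteCoord_iff hvu).2 he')
  obtain ⟨c, hc, hw'⟩ := psi_eq_of_isBasisOf hvu hw
  obtain ⟨a, ha, hwd'⟩ := psi_eq_of_isBasisOf hwd hdel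
  obtain ⟨b, hb, hwc'⟩ := psi_eq_of_isBasisOf hwc hcon
  refine ⟨c * a, c * b, mul_ne_zero hc ha, mul_ne_zero hc hb, ?_⟩
  rw [hw', psi_cons hve hu0, hwd', hwc', map_mul, map_mul, rename_C, rename_C, mul_pow, mul_pow,
    C_mul, C_mul]
  ring

end DeletionContraction

/-- **Theorem (Deletion–contraction for configuration polynomials).**
Let `W ⊆ K^E` realize a matroid `M` and let `e ∈ E`.  Up to nonzero square constant
factors: `ψ_W = ψ_{W∖e} = ψ_{W/e}` if `e` is a loop; `ψ_W = x_e·ψ_{W∖e} = x_e·ψ_{W/e}`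
if `e` is a coloop; and `ψ_W = ψ_{W∖e} + x_e·ψ_{W/e}` otherwise, in which case
`∂ψ_W/∂x_e = ψ_{W/e}` and `ψ_W|_{x_e = 0} = ψ_{W∖e}`. -/
theorem psi_deletion_contraction
    (W : Submodule K (E → K)) (e : E) {r rd rc : ℕ}
    (w : Fin r → E → K)
    (wd : Fin rd → {x : E // x ∉ ({e} : Finset E)} → K)
    (wc : Fin rc → {x : E // x ∉ ({e} : Finset E)} → K)
    (hw : IsBasisOf w W)
    (hwd : IsBasisOf wd (deleteConfig W {e}))
    (hwc : IsBasisOf wc (contractConfig W {e})) :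
    (¬ Indep W {e} →
      ∃ a b : K, a ≠ 0 ∧ b ≠ 0 ∧
        psi w = MvPolynomial.C (a ^ 2) * MvPolynomial.rename Subtype.val (psi wd) ∧
        psi w = MvPolynomial.C (b ^ 2) * MvPolynomial.rename Subtype.val (psi wc)) ∧
    ((∀ B : Finset E, IsBase W B → e ∈ B) →
      ∃ a b : K, a ≠ 0 ∧ b ≠ 0 ∧
        psi w = MvPolynomial.C (a ^ 2) * MvPolynomial.X e *
          MvPolynomial.rename Subtype.val (psi wd) ∧
        psi w = MvPolynomial.C (b ^ 2) * MvPolynomial.X e *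
          MvPolynomial.rename Subtype.val (psi wc)) ∧
    (Indep W {e} → ¬ (∀ B : Finset E, IsBase W B → e ∈ B) →
      ∃ a b : K, a ≠ 0 ∧ b ≠ 0 ∧
        psi w = MvPolynomial.C (a ^ 2) * MvPolynomial.rename Subtype.val (psi wd)
              + MvPolynomial.C (b ^ 2) * MvPolynomial.X e *
                  MvPolynomial.rename Subtype.val (psi wc) ∧
        MvPolynomial.pderiv e (psi w) =
          MvPolynomial.C (b ^ 2) * MvPolynomial.rename Subtype.val (psi wc) ∧
        MvPolynomial.aeval (fun f : E => if f = e then 0 else MvPolynomial.X f) (psi w) =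
          MvPolynomial.C (a ^ 2) * MvPolynomial.rename Subtype.val (psi wd)) := by
  refine ⟨psi_deletion_contraction_loop hw hwd hwc, psi_deletion_contraction_coloop hw hwd hwc,
    fun he he' => ?_⟩
  obtain ⟨a, b, ha, hb, hpsi⟩ :=
    psi_deletion_contraction_of_indep_of_not_coloop hw hwd hwc he he'
  refine ⟨a, b, ha, hb, hpsi, ?_, ?_⟩
  · rw [hpsi, map_add, mul_assoc, pderiv_C_mul, pderiv_C_mul, pderiv_mul, pderiv_rename_val,
      pderiv_rename_val, pderiv_X_self]
    ring
  · rw [hpsi, map_add, map_mul, map_mul, map_mul, aeval_C, aeval_X, if_pos rfl,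
      aeval_ite_rename_val, algebraMap_eq, mul_zero, zero_mul, add_zero]

end Config
end
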